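/- Let Γ be a discrete, cocompact subgroup of SL(2,ℝ) and let n ≥ 1. If P ∈ V_{2n} satisfies γ·P = P for every γ ∈ Γ (under the substitution action), then P = 0. In other words, the space of Γ-invariant vectors of the (2n+1)-dimensional irreducible representation of SL(2,ℝ) restricted to Γ is zero. -/

import Mathlib

open MvPolynomial Matrix

noncomputable section

/-- `SL(2,ℝ)`. -/
abbrev SL2R := Matrix.SpecialLinearGroup (Fin 2) ℝ

/-- The natural topology on `SL(2,ℝ)` (as a subspace of the `2 × 2` real matrices). -/
instance : TopologicalSpace SL2R :=
  TopologicalSpace.induced (fun g : SL2R => (g : Matrix (Fin 2) (Fin 2) ℝ)) inferInstance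

/-- `V m`: the space of homogeneous polynomials (binary forms) of degree `m`
in two variables with real coefficients. -/
def Vm (m : ℕ) : Submodule ℝ (MvPolynomial (Fin 2) ℝ) :=
  homogeneousSubmodule (Fin 2) ℝ m

/-- Linear substitution of variables by `g⁻¹`, as an algebra endomorphism of the
polynomial ring: `(subst g P)(v) = P (g⁻¹ v)`. -/
def subst (g : SL2R) : MvPolynomial (Fin 2) ℝ →ₐ[ℝ] MvPolynomial (Fin 2) ℝ :=
  aeval fun i => ∑ j, ((g⁻¹ : SL2R) : Matrix (Fin 2) (Fin 2) ℝ) i j • (X j : MvPolynomial (Fin 2) ℝ)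

lemma subst_mem (g : SL2R) {m : ℕ} {P : MvPolynomial (Fin 2) ℝ} (hP : P ∈ Vm m) :
    subst g P ∈ Vm m := by
  have h1 : ∀ i : Fin 2,
      (∑ j, ((g⁻¹ : SL2R) : Matrix (Fin 2) (Fin 2) ℝ) i j •
        (X j : MvPolynomial (Fin 2) ℝ)).IsHomogeneous 1 := by
    intro i
    apply MvPolynomial.IsHomogeneous.sum
    intro j _
    exact (homogeneousSubmodule (Fin 2) ℝ 1).smul_mem _ (isHomogeneous_X ℝ j)
  have := (MvPolynomial.IsHomogeneous.aeval hP _ h1)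
  simpa [Vm, mem_homogeneousSubmodule, subst] using this

/-- The substitution action of `g ∈ SL(2,ℝ)` on the space `V m` of binary forms of
degree `m`: `(g · P)(v) = P (g⁻¹ v)`.  This is the irreducible `(m+1)`-dimensional
representation of `SL(2,ℝ)`. -/
def substV (m : ℕ) (g : SL2R) : Vm m →ₗ[ℝ] Vm m :=
  (subst g).toLinearMap.restrict fun _ hP => subst_mem g hP

instance (m : ℕ) : FiniteDimensional ℝ (Vm m) :=
  Submodule.finiteDimensional_of_le (S₂ := restrictTotalDegree (Fin 2) ℝ m)
    (fun P hP => (mem_restrictTotalDegree _ _ _).2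
      (MvPolynomial.IsHomogeneous.totalDegree_le hP))

set_option synthInstance.maxHeartbeats 1000000 in
/-- The canonical topology on the finite-dimensional real vector space `V m`. -/
instance (m : ℕ) : TopologicalSpace (Vm m) :=
  TopologicalSpace.induced (Module.finBasis ℝ (Vm m)).equivFun inferInstance

end

/-! For `e₀ = (1, 0)`, the function `g ↦ P (g⁻¹ e₀)` on `SL(2,ℝ)` is continuous and, when `P` is
`Γ`-invariant, right `Γ`-invariant; so it factors through the compact space `SL(2,ℝ)/Γ` and is
bounded. Since `SL(2,ℝ)` acts transitively on nonzero vectors, `P` itself is bounded on `ℝ²`. But a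
nonzero form of positive degree `m` satisfies `P (t v) = tᵐ P v` and so is unbounded. -/

namespace MvPolynomial.IsHomogeneous

variable {σ : Type*}

theorem eval_smul {R : Type*} [CommSemiring R] {P : MvPolynomial σ R} {m : ℕ}
    (hP : P.IsHomogeneous m) (t : R) (w : σ → R) : eval (t • w) P = t ^ m * eval w P := by
  simp only [eval_eq, Finset.mul_sum, Pi.smul_apply, smul_eq_mul, mul_pow, Finset.prod_mul_distrib,
    Finset.prod_pow_eq_pow_sum]
  refine Finset.sum_congr rfl fun d hd => ?_
  have hdeg : ∑ i ∈ d.support, d i = m := by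
    rw [← Finsupp.degree_apply, Finsupp.degree_eq_weight_one]
    exact hP (mem_support_iff.mp hd)
  rw [hdeg]
  ring

theorem eq_zero_of_isBounded_range_eval {P : MvPolynomial σ ℝ} {m : ℕ} (hP : P.IsHomogeneous m)
    (hm : m ≠ 0) (hbdd : Bornology.IsBounded (Set.range fun w => eval w P)) : P = 0 := by
  refine hP.eq_zero_of_forall_eval_eq_zero fun w => ?_
  by_contra hw
  obtain ⟨C, hC⟩ := isBounded_iff_forall_norm_le.mp hbdd
  obtain ⟨t, hCt, ht⟩ := (((Filter.tendsto_pow_atTop hm).atTop_mul_const (norm_pos_iff.mpr hw)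
    ).eventually_gt_atTop C).and (Filter.eventually_ge_atTop 0) |>.exists
  have hscale : ‖eval (t • w) P‖ = t ^ m * ‖eval w P‖ := by
    rw [hP.eval_smul, norm_mul, norm_pow, Real.norm_of_nonneg ht]
  exact (hC _ ⟨t • w, rfl⟩).not_gt (hscale ▸ hCt)

end MvPolynomial.IsHomogeneous

theorem QuotientGroup.isBounded_range_of_forall_mul_eq {G X : Type*} [Group G] [TopologicalSpace G]
    [PseudoMetricSpace X] (Γ : Subgroup G) [CompactSpace (G ⧸ Γ)] {f : G → X} (hf : Continuous f)
    (hΓ : ∀ g, ∀ γ ∈ Γ, f (g * γ) = f g) : Bornology.IsBounded (Set.range f) := by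
  have hlift : ∀ a b, QuotientGroup.leftRel Γ a b → f a = f b := fun a b hab => by
    rw [← mul_inv_cancel_left a b, hΓ a _ (QuotientGroup.leftRel_apply.mp hab)]
  have := (isCompact_range (hf.quotient_liftOn' hlift)).isBounded
  rwa [← QuotientGroup.mk_surjective.range_comp] at this

theorem Matrix.SpecialLinearGroup.exists_mulVec_single_eq {K : Type*} [Field K] {w : Fin 2 → K}
    (hw : w ≠ 0) :
    ∃ g : SpecialLinearGroup (Fin 2) K, (g : Matrix (Fin 2) (Fin 2) K) *ᵥ Pi.single 0 1 = w := by
  simp only [mulVec_single_one]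
  by_cases h0 : w 0 = 0
  · have h1 : w 1 ≠ 0 := fun h1 => hw (funext fun i => by fin_cases i <;> assumption)
    refine ⟨⟨!![0, -(w 1)⁻¹; w 1, 0], by simp [det_fin_two_of, h1]⟩, funext fun i => ?_⟩
    fin_cases i <;> simp [h0]
  · refine ⟨⟨!![w 0, 0; w 1, (w 0)⁻¹], by simp [det_fin_two_of, h0]⟩, funext fun i => ?_⟩
    fin_cases i <;> simp

theorem eval_subst (g : SL2R) (P : MvPolynomial (Fin 2) ℝ) (v : Fin 2 → ℝ) :
    eval v (subst g P) = eval (((g⁻¹ : SL2R) : Matrix (Fin 2) (Fin 2) ℝ) *ᵥ v) P := by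
  rw [subst, map_aeval, eval]
  congr 2
  · ext; simp
  · ext i; simp [mulVec, dotProduct]

theorem isBounded_range_eval_of_forall_subst_eq (Γ : Subgroup SL2R) [CompactSpace (SL2R ⧸ Γ)]
    {P : MvPolynomial (Fin 2) ℝ} (hinv : ∀ γ : SL2R, γ ∈ Γ → subst γ P = P) :
    Bornology.IsBounded (Set.range fun w => eval w P) := by
  set f : SL2R → ℝ := fun g => eval (((g⁻¹ : SL2R) : Matrix (Fin 2) (Fin 2) ℝ) *ᵥ Pi.single 0 1) P
  have hf : Continuous f := (continuous_eval P).comp (by fun_prop)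
  have hΓ : ∀ g, ∀ γ ∈ Γ, f (g * γ) = f g := fun g γ hγ => calc
    f (g * γ) = eval (((γ⁻¹ : SL2R) : Matrix (Fin 2) (Fin 2) ℝ) *ᵥ
        ((g⁻¹ : SL2R) : Matrix (Fin 2) (Fin 2) ℝ) *ᵥ Pi.single 0 1) P := by
      simp only [f, _root_.mul_inv_rev, mulVec_mulVec]; rfl
    _ = f g := by rw [← eval_subst, hinv γ hγ]
  refine ((QuotientGroup.isBounded_range_of_forall_mul_eq Γ hf hΓ).insert (eval 0 P)).subset ?_
  rintro _ ⟨w, rfl⟩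
  obtain rfl | hw := eq_or_ne w 0
  · exact Set.mem_insert _ _
  obtain ⟨g, hg⟩ := SpecialLinearGroup.exists_mulVec_single_eq hw
  exact Set.mem_insert_of_mem _ ⟨g⁻¹, by simp only [f, inv_inv, hg]⟩

theorem no_nonzero_invariant_vectors_general
    (Γ : Subgroup SL2R)
    (hcocompact : CompactSpace (SL2R ⧸ Γ))
    (n : ℕ) (hn : 1 ≤ n)
    (P : MvPolynomial (Fin 2) ℝ) (hP : P ∈ Vm (2 * n))
    (hinv : ∀ γ : SL2R, γ ∈ Γ → subst γ P = P) :
    P = 0 :=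
  ((mem_homogeneousSubmodule _ _).mp hP).eq_zero_of_isBounded_range_eval (by omega)
    (isBounded_range_eval_of_forall_subst_eq Γ hinv)

/-- If `Γ` is a discrete cocompact subgroup of `SL(2,ℝ)` and `n ≥ 1`, then the only
`Γ`-invariant binary form of degree `2n` (under the substitution action) is zero. -/
theorem no_nonzero_invariant_vectors
    (Γ : Subgroup SL2R) (hdisc : DiscreteTopology Γ)
    (hcocompact : CompactSpace (SL2R ⧸ Γ))
    (n : ℕ) (hn : 1 ≤ n)
    (P : MvPolynomial (Fin 2) ℝ) (hP : P ∈ Vm (2 * n))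
    (hinv : ∀ γ : SL2R, γ ∈ Γ → subst γ P = P) :
    P = 0 :=
  no_nonzero_invariant_vectors_general Γ hcocompact n hn P hP hinv
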